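/- arXiv:1303.4015 — 3 statements merged into one kernel-verified Lean document; each statement's English description precedes it below -/
import Mathlib

section
/- Let L_{t-1} = Σ_i Σ_{l≠y_i} (1/m_{y_i}) exp(f_{t-1}(i,l) − f_{t-1}(i,y_i)) and suppose the weak classifier h_t satisfies the edge condition D_t · 1_{h_t} ≤ D_t · U_{δ_t} where U_{δ_t}(i,l) = (1−δ_t)/K + δ_t·1[l=y_i]. With A_+ = Σ_{i: h_t(i)=y_i} L_{t-1}(i) and A_− = Σ_{i: h_t(i)≠y_i} (1/m_{y_i}) exp(f_{t-1}(i,h_t(i)) − f_{t-1}(i,y_i)), the edge condition implies A_+ − A_− ≥ δ_t L_{t-1}. -/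
/-! The cost matrix `D` has zero row sums, since its diagonal entry `D i (y i) = -L i` cancels
the off-diagonal entries. Hence the uniform part `(1 - δ) / K` of the baseline `U_δ` contributes
nothing and `D · U_δ = -δ ∑ L`, while `D · 1_h = ∑ D i (h i) = -A₊ + A₋`. -/

open Finset

section CostRow

variable {κ R : Type*} [Fintype κ] [DecidableEq κ]

lemma sum_mul_ite_eq_apply [NonAssocSemiring R] (c : κ → R) (a : κ) :
    ∑ l, c l * (if a = l then 1 else 0) = c a := by
  simp

lemma sum_eq_zero_of_apply_eq_neg_sum_ne [AddCommGroup R] (c : κ → R) (k : κ)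
    (hk : c k = -∑ l ∈ univ.filter (· ≠ k), c l) : ∑ l, c l = 0 := by
  rw [← add_sum_erase univ c (mem_univ k), hk, filter_ne', neg_add_cancel]

lemma sum_mul_const_add_ite_of_sum_eq_zero [CommSemiring R] (c : κ → R) (hc : ∑ l, c l = 0)
    (k : κ) (a δ : R) :
    ∑ l, c l * (a + if l = k then δ else 0) = δ * c k := by
  rw [sum_congr rfl fun l _ => mul_add (c l) a _, sum_add_distrib, ← sum_mul, hc, zero_mul,
    zero_add]
  simp [mul_comm]

end CostRow

theorem stmt_8_general {K m : ℕ}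
    (y : Fin m → Fin K) (f : Fin m → Fin K → ℝ) (h : Fin m → Fin K)
    (δ : ℝ)
    (w : Fin m → ℝ)
    (L : Fin m → ℝ)
    (hL : ∀ i, L i = ∑ l ∈ Finset.univ.filter (fun l => l ≠ y i),
        w i * Real.exp (f i l - f i (y i)))
    (D : Fin m → Fin K → ℝ)
    (hD : ∀ i l, D i l = if l = y i then -(L i) else w i * Real.exp (f i l - f i (y i)))
    (hedge : ∑ i, ∑ l, D i l * (if h i = l then (1:ℝ) else 0) ≤
      ∑ i, ∑ l, D i l * ((1 - δ) / K + if l = y i then δ else 0)) :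
    δ * (∑ i, L i) ≤
      (∑ i ∈ Finset.univ.filter (fun i => h i = y i), L i) -
      (∑ i ∈ Finset.univ.filter (fun i => h i ≠ y i),
        w i * Real.exp (f i (h i) - f i (y i))) := by
  have hdiag : ∀ i, D i (y i) = -L i := fun i => by rw [hD, if_pos rfl]
  have hoff : ∀ i, ∑ l ∈ univ.filter (· ≠ y i), D i l = L i := fun i => by
    rw [hL]
    exact sum_congr rfl fun l hl => by rw [hD, if_neg (mem_filter.1 hl).2]
  have hrow : ∀ i, ∑ l, D i l = 0 := fun i =>
    sum_eq_zero_of_apply_eq_neg_sum_ne (D i) (y i) (by rw [hdiag, hoff])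
  have hpick : ∑ i, ∑ l, D i l * (if h i = l then (1:ℝ) else 0) =
      -(∑ i ∈ univ.filter (fun i => h i = y i), L i) +
      ∑ i ∈ univ.filter (fun i => h i ≠ y i), w i * Real.exp (f i (h i) - f i (y i)) := by
    simp only [sum_mul_ite_eq_apply]
    rw [← sum_filter_add_sum_filter_not univ (fun i => h i = y i), ← sum_neg_distrib]
    congr 1 <;> refine sum_congr rfl fun i hi => ?_
    · rw [(mem_filter.1 hi).2, hdiag]
    · rw [hD, if_neg (mem_filter.1 hi).2]
  have hbaseline : ∑ i, ∑ l, D i l * ((1 - δ) / K + if l = y i then δ else 0) =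
      -(δ * ∑ i, L i) := by
    simp only [fun i => sum_mul_const_add_ite_of_sum_eq_zero (D i) (hrow i), hdiag, mul_neg,
      sum_neg_distrib, mul_sum]
  linarith

/-- The edge condition D_t · 1_{h_t} ≤ D_t · U_{δ_t} implies
A₊ − A₋ ≥ δ_t L_{t−1}. -/
theorem stmt_8 {K m : ℕ} (hK : 0 < K)
    (y : Fin m → Fin K) (f : Fin m → Fin K → ℝ) (h : Fin m → Fin K)
    (δ : ℝ) (hδ : δ ∈ Set.Icc (0:ℝ) 1)
    (w : Fin m → ℝ)
    (hw : ∀ i, w i = 1 / ((Finset.univ.filter (fun i' => y i' = y i)).card : ℝ))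
    (L : Fin m → ℝ)
    (hL : ∀ i, L i = ∑ l ∈ Finset.univ.filter (fun l => l ≠ y i),
        w i * Real.exp (f i l - f i (y i)))
    (D : Fin m → Fin K → ℝ)
    (hD : ∀ i l, D i l = if l = y i then -(L i) else w i * Real.exp (f i l - f i (y i)))
    (hedge : ∑ i, ∑ l, D i l * (if h i = l then (1:ℝ) else 0) ≤
      ∑ i, ∑ l, D i l * ((1 - δ) / K + if l = y i then δ else 0)) :
    δ * (∑ i, L i) ≤
      (∑ i ∈ Finset.univ.filter (fun i => h i = y i), L i) -
      (∑ i ∈ Finset.univ.filter (fun i => h i ≠ y i),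
        w i * Real.exp (f i (h i) - f i (y i))) :=
  stmt_8_general y f h δ w L hL D hD hedge
end

section
/- Under the edge condition of the previous setup, updating scores by f_t(i,l) = f_{t-1}(i,l) + α·1[h_t(i)=l] with α > 0 yields L_t ≤ (((1−δ_t)/2)e^{α} + ((1+δ_t)/2)e^{−α}) · L_{t-1}, i.e., the exponential loss drops by at least the factor 1 − ((e^{α} − e^{−α})/2)δ_t + ((e^{α} + e^{−α} − 2)/2). -/
/-!
Boosting along `h` multiplies the whole loss of an example that `h` classifies correctly by
`e^{-α}`, and only the term at `h i` of a misclassified example by `e^{α}`. Hence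
`L_t = L + (e^{-α} - 1) A₊ + (e^{α} - 1) A₋`. Since every cost row sums to zero, the edge
condition reads `A₊ - A₋ ≥ δ L`; together with `A₊ + A₋ ≤ L` this bounds `L_t` by the stated
multiple of `L`.
-/

open Finset Real

section Example

variable {κ : Type*} [Fintype κ] [DecidableEq κ]

noncomputable def exampleLoss (w : ℝ) (f : κ → ℝ) (y : κ) : ℝ :=
  ∑ l ∈ univ.filter (fun l => l ≠ y), w * exp (f l - f y)

def boostScores (f : κ → ℝ) (p : κ) (α : ℝ) : κ → ℝ :=
  fun l => f l + α * if p = l then 1 else 0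

noncomputable def costRow (w : ℝ) (f : κ → ℝ) (y : κ) : κ → ℝ :=
  fun l => if l = y then -exampleLoss w f y else w * exp (f l - f y)

-- `correctMass` and `wrongMass` are the contributions of one example to `A₊` and `A₋`.
noncomputable def correctMass (w : ℝ) (f : κ → ℝ) (y p : κ) : ℝ :=
  if p = y then exampleLoss w f y else 0

noncomputable def wrongMass (w : ℝ) (f : κ → ℝ) (y p : κ) : ℝ :=
  if p = y then 0 else w * exp (f p - f y)

theorem sum_costRow (w : ℝ) (f : κ → ℝ) (y : κ) : ∑ l, costRow w f y l = 0 := by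
  rw [← add_sum_erase _ _ (mem_univ y), ← filter_ne', costRow, if_pos rfl, neg_add_eq_zero]
  exact sum_congr rfl fun l hl => by rw [costRow, if_neg (mem_filter.mp hl).2]

theorem costRow_apply_pred (w : ℝ) (f : κ → ℝ) (y p : κ) :
    costRow w f y p = wrongMass w f y p - correctMass w f y p := by
  unfold costRow wrongMass correctMass
  split_ifs <;> ring

theorem correctMass_add_wrongMass_le {w : ℝ} (hw : 0 ≤ w) (f : κ → ℝ) (y p : κ) :
    correctMass w f y p + wrongMass w f y p ≤ exampleLoss w f y := by
  unfold correctMass wrongMass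
  split_ifs with hp
  · rw [add_zero]
  · rw [zero_add]
    exact single_le_sum (f := fun l => w * exp (f l - f y))
      (fun l _ => mul_nonneg hw (exp_pos _).le) (mem_filter.mpr ⟨mem_univ p, hp⟩)

theorem exampleLoss_boostScores (w : ℝ) (f : κ → ℝ) (y p : κ) (α : ℝ) :
    exampleLoss w (boostScores f p α) y = exampleLoss w f y
      + (exp (-α) - 1) * correctMass w f y p + (exp α - 1) * wrongMass w f y p := by
  by_cases hp : p = y
  · subst hp
    have hcorrect : exampleLoss w (boostScores f p α) p = exp (-α) * exampleLoss w f p := by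
      rw [exampleLoss, exampleLoss, mul_sum]
      refine sum_congr rfl fun l hl => ?_
      rw [boostScores, boostScores, if_pos rfl, if_neg (mem_filter.mp hl).2.symm, mul_zero,
        add_zero, mul_one, show f l - (f p + α) = f l - f p + -α by ring, exp_add]
      ring
    rw [hcorrect, correctMass, wrongMass, if_pos rfl, if_pos rfl]
    ring
  · unfold exampleLoss boostScores correctMass wrongMass
    simp only [if_neg hp, mul_zero, add_zero, mul_ite, mul_one]
    have hterm : ∀ l ∈ univ.filter (fun l => l ≠ y),
        w * exp (f l + (if p = l then α else 0) - f y)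
          = w * exp (f l - f y) + if p = l then (exp α - 1) * (w * exp (f p - f y)) else 0 := by
      intro l _
      split_ifs with hpl
      · subst hpl
        rw [show f p + α - f y = f p - f y + α by ring, exp_add]
        ring
      · rw [add_zero, add_zero]
    rw [sum_congr rfl hterm, sum_add_distrib, sum_ite_eq, if_pos (by simp [hp])]

theorem sum_mul_const_add_indicator {v : κ → ℝ} (hv : ∑ l, v l = 0) (c δ : ℝ) (y : κ) :
    ∑ l, v l * (c + if l = y then δ else 0) = δ * v y := by
  simp only [mul_add, sum_add_distrib, ← sum_mul, hv, zero_mul, zero_add, mul_ite, mul_zero,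
    sum_ite_eq', mem_univ, if_true]
  exact mul_comm _ _

theorem edge_le_sum_correctMass_sub_wrongMass {ι : Type*} [Fintype ι] (w : ι → ℝ)
    (f : ι → κ → ℝ) (y h : ι → κ) (c δ : ℝ)
    (hedge : ∑ i, ∑ l, costRow (w i) (f i) (y i) l * (if h i = l then 1 else 0) ≤
      ∑ i, ∑ l, costRow (w i) (f i) (y i) l * (c + if l = y i then δ else 0)) :
    δ * ∑ i, exampleLoss (w i) (f i) (y i)
      ≤ ∑ i, correctMass (w i) (f i) (y i) (h i) - ∑ i, wrongMass (w i) (f i) (y i) (h i) := by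
  have hpred : ∀ i, ∑ l, costRow (w i) (f i) (y i) l * (if h i = l then 1 else 0)
      = wrongMass (w i) (f i) (y i) (h i) - correctMass (w i) (f i) (y i) (h i) := fun i => by
    rw [sum_mul_boole, if_pos (mem_univ _), costRow_apply_pred]
  have htarget : ∀ i, ∑ l, costRow (w i) (f i) (y i) l * (c + if l = y i then δ else 0)
      = -(δ * exampleLoss (w i) (f i) (y i)) := fun i => by
    rw [sum_mul_const_add_indicator (sum_costRow _ _ _), costRow, if_pos rfl, mul_neg]
  simp only [hpred, htarget, sum_sub_distrib, sum_neg_distrib] at hedge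
  rw [mul_sum]
  linarith

end Example

theorem loss_factor_of_edge {α δ A B L : ℝ} (hα : 0 ≤ α) (hmass : A + B ≤ L)
    (hedge : δ * L ≤ A - B) :
    L + (exp (-α) - 1) * A + (exp α - 1) * B
      ≤ ((1 - δ) / 2 * exp α + (1 + δ) / 2 * exp (-α)) * L := by
  have hsinh : exp (-α) ≤ exp α := exp_le_exp.mpr (by linarith)
  have hcosh : 2 ≤ exp α + exp (-α) := by linarith [one_le_cosh α, cosh_eq α]
  -- the gap is `(cosh α - 1) (L - A - B) + sinh α (A - B - δ L)`
  linarith [mul_nonneg (sub_nonneg.mpr hcosh) (sub_nonneg.mpr hmass),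
    mul_nonneg (sub_nonneg.mpr hsinh) (sub_nonneg.mpr hedge)]

theorem stmt_9_general {K m : ℕ}
    (y : Fin m → Fin K) (f : Fin m → Fin K → ℝ) (h : Fin m → Fin K)
    (α δ : ℝ) (hα : 0 < α)
    (w : Fin m → ℝ)
    (hw : ∀ i, w i = 1 / ((Finset.univ.filter (fun i' => y i' = y i)).card : ℝ))
    (L : Fin m → ℝ)
    (hL : ∀ i, L i = ∑ l ∈ Finset.univ.filter (fun l => l ≠ y i),
        w i * Real.exp (f i l - f i (y i)))
    (D : Fin m → Fin K → ℝ)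
    (hD : ∀ i l, D i l = if l = y i then -(L i) else w i * Real.exp (f i l - f i (y i)))
    (hedge : ∑ i, ∑ l, D i l * (if h i = l then (1:ℝ) else 0) ≤
      ∑ i, ∑ l, D i l * ((1 - δ) / K + if l = y i then δ else 0))
    (g : Fin m → Fin K → ℝ)
    (hg : ∀ i l, g i l = f i l + α * (if h i = l then (1:ℝ) else 0)) :
    (∑ i, ∑ l ∈ Finset.univ.filter (fun l => l ≠ y i),
        w i * Real.exp (g i l - g i (y i))) ≤
      (((1 - δ) / 2) * Real.exp α + ((1 + δ) / 2) * Real.exp (-α)) * ∑ i, L i := by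
  obtain rfl : L = fun i => exampleLoss (w i) (f i) (y i) := funext hL
  obtain rfl : D = fun i => costRow (w i) (f i) (y i) := funext fun i => funext (hD i)
  obtain rfl : g = fun i => boostScores (f i) (h i) α := funext fun i => funext (hg i)
  have hw0 : ∀ i, 0 ≤ w i := fun i => by rw [hw]; positivity
  change ∑ i, exampleLoss (w i) (boostScores (f i) (h i) α) (y i) ≤ _
  simp only [exampleLoss_boostScores, sum_add_distrib, ← mul_sum]
  refine loss_factor_of_edge hα.le ?_ (edge_le_sum_correctMass_sub_wrongMass w f y h _ δ hedge)
  rw [← sum_add_distrib]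
  exact sum_le_sum fun i _ => correctMass_add_wrongMass_le (hw0 i) _ _ _

/-- Under the edge condition, updating scores by
f_t(i,l) = f_{t−1}(i,l) + α·1[h_t(i)=l] with α > 0 yields
L_t ≤ (((1−δ)/2)e^α + ((1+δ)/2)e^{−α})·L_{t−1}. -/
theorem stmt_9 {K m : ℕ} (hK : 0 < K)
    (y : Fin m → Fin K) (f : Fin m → Fin K → ℝ) (h : Fin m → Fin K)
    (α δ : ℝ) (hα : 0 < α) (hδ : δ ∈ Set.Icc (0:ℝ) 1)
    (w : Fin m → ℝ)
    (hw : ∀ i, w i = 1 / ((Finset.univ.filter (fun i' => y i' = y i)).card : ℝ))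
    (L : Fin m → ℝ)
    (hL : ∀ i, L i = ∑ l ∈ Finset.univ.filter (fun l => l ≠ y i),
        w i * Real.exp (f i l - f i (y i)))
    (D : Fin m → Fin K → ℝ)
    (hD : ∀ i l, D i l = if l = y i then -(L i) else w i * Real.exp (f i l - f i (y i)))
    (hedge : ∑ i, ∑ l, D i l * (if h i = l then (1:ℝ) else 0) ≤
      ∑ i, ∑ l, D i l * ((1 - δ) / K + if l = y i then δ else 0))
    (g : Fin m → Fin K → ℝ)
    (hg : ∀ i l, g i l = f i l + α * (if h i = l then (1:ℝ) else 0)) :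
    (∑ i, ∑ l ∈ Finset.univ.filter (fun l => l ≠ y i),
        w i * Real.exp (g i l - g i (y i))) ≤
      (((1 - δ) / 2) * Real.exp α + ((1 + δ) / 2) * Real.exp (-α)) * ∑ i, L i :=
  stmt_9_general y f h α δ hα w hw L hL D hD hedge g hg
end

section
/- Combining the bounds: the squared operator norm of the empirical error-focused confusion matrix of the final boosted hypothesis satisfies ‖C_S‖² ≤ K(K−1)·Π_{t=1}^T √(1−δ_t²), under the weak learning edge conditions with edges δ_t at each round. -/
/-!
The weighted training error of the final vote, which bounds `∑ C_{lj}² ≥ ‖C‖²` because the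
entries of `C` lie in `[0, 1]`, is dominated by the exponential potential
`L = ∑ᵢ ∑_{j ≠ yᵢ} wᵢ exp (f(i, j) - f(i, yᵢ))` of the accumulated scores `f`.
Since `exp (α x) ≤ cosh α + x sinh α` for `|x| ≤ 1`, one round multiplies `L` by at most
`cosh α - δ sinh α`, which is `√(1 - δ²)` for `α = artanh δ`; the rows of the edge cost sum to
zero, so the uniform part `(1 - δ) / K` of the baseline drops out of the edge condition.
Finally `L₀ = (K - 1) ∑ᵢ 1 / m_{yᵢ} = K (K - 1)`.
-/

open Finset Real

section Potential

variable {ι κ : Type*} [Fintype κ] [DecidableEq κ]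

def edgeCost (y : ι → κ) (c : ι → κ → ℝ) (i : ι) (l : κ) : ℝ :=
  if l = y i then -∑ j ∈ univ.filter (· ≠ y i), c i j else c i l

noncomputable def potential [Fintype ι] (y : ι → κ) (w : ι → ℝ) (g : ι → κ → ℝ) : ℝ :=
  ∑ i, ∑ j ∈ univ.filter (· ≠ y i), w i * exp (g i j - g i (y i))

lemma sum_edgeCost (y : ι → κ) (c : ι → κ → ℝ) (i : ι) : ∑ l, edgeCost y c i l = 0 := by
  rw [← add_sum_erase _ _ (mem_univ (y i)), ← filter_ne']
  unfold edgeCost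
  rw [if_pos rfl, sum_congr rfl fun l hl => if_neg (mem_filter.1 hl).2, neg_add_cancel]

lemma sum_edgeCost_mul_baseline (y : ι → κ) (c : ι → κ → ℝ) (i : ι) (b δ : ℝ) :
    ∑ l, edgeCost y c i l * (b + if l = y i then δ else 0) =
      -δ * ∑ j ∈ univ.filter (· ≠ y i), c i j := by
  simp only [mul_add, sum_add_distrib, ← sum_mul, sum_edgeCost, zero_mul, zero_add, mul_ite,
    mul_zero, sum_ite_eq', mem_univ, if_true]
  rw [edgeCost, if_pos rfl]
  ring

lemma sum_edgeCost_mul_vote (y : ι → κ) (c : ι → κ → ℝ) (i : ι) (k : κ) :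
    ∑ l, edgeCost y c i l * (if k = l then 1 else 0) = edgeCost y c i k := by
  simp

lemma sum_mul_vote_sub_vote (y : ι → κ) (c : ι → κ → ℝ) (i : ι) (k : κ) :
    ∑ j ∈ univ.filter (· ≠ y i),
        c i j * ((if k = j then (1 : ℝ) else 0) - (if k = y i then 1 else 0)) =
      edgeCost y c i k := by
  by_cases hk : k = y i
  · subst hk
    simp only [edgeCost, if_true, ← sum_neg_distrib]
    refine sum_congr rfl fun j hj => ?_
    simp [Ne.symm (mem_filter.1 hj).2]
  · simp [edgeCost, hk, mul_ite, sum_ite_eq]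

lemma cosh_artanh_sub_mul_sinh_artanh {δ : ℝ} (hδ : δ ∈ Set.Ioo (-1) 1) :
    cosh (artanh δ) - δ * sinh (artanh δ) = √(1 - δ ^ 2) := by
  rw [cosh_artanh hδ, sinh_artanh hδ, mul_div, ← sub_div, ← sq]
  exact div_sqrt

lemma potential_add_vote_le [Fintype ι] (y k : ι → κ) (w : ι → ℝ) (g : ι → κ → ℝ) {b δ : ℝ}
    (hw : ∀ i, 0 ≤ w i) (hδ : δ ∈ Set.Ico 0 1)
    (hedge : ∑ i, ∑ l, edgeCost y (fun i j => w i * exp (g i j - g i (y i))) i l *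
        (if k i = l then 1 else 0) ≤
      ∑ i, ∑ l, edgeCost y (fun i j => w i * exp (g i j - g i (y i))) i l *
        (b + if l = y i then δ else 0)) :
    potential y w (fun i l => g i l + artanh δ * if k i = l then 1 else 0) ≤
      √(1 - δ ^ 2) * potential y w g := by
  set c : ι → κ → ℝ := fun i j => w i * exp (g i j - g i (y i))
  set a := artanh δ
  set x : ι → κ → ℝ := fun i j => (if k i = j then 1 else 0) - (if k i = y i then 1 else 0)
  have hP : potential y w g = ∑ i, ∑ j ∈ univ.filter (· ≠ y i), c i j := rfl
  simp only [sum_edgeCost_mul_vote, sum_edgeCost_mul_baseline, ← mul_sum, ← hP] at hedge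
  have hx : ∀ i j, |x i j| ≤ 1 := fun i j => by
    simp only [x]
    split_ifs <;> norm_num
  calc potential y w (fun i l => g i l + a * if k i = l then 1 else 0)
      = ∑ i, ∑ j ∈ univ.filter (· ≠ y i), c i j * exp (x i j * a) := by
        refine sum_congr rfl fun i _ => sum_congr rfl fun j _ => ?_
        rw [mul_assoc, ← exp_add]
        congr 2
        ring
    _ ≤ ∑ i, ∑ j ∈ univ.filter (· ≠ y i), c i j * (cosh a + x i j * sinh a) := by
        gcongr with i _ j _
        · exact mul_nonneg (hw i) (exp_pos _).le
        · exact exp_mul_le_cosh_add_mul_sinh (hx i j) a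
    _ = cosh a * potential y w g + sinh a * ∑ i, edgeCost y c i (k i) := by
        simp only [hP, mul_add, sum_add_distrib, mul_sum, ← sum_mul_vote_sub_vote]
        congr 1 <;> refine sum_congr rfl fun i _ => sum_congr rfl fun j _ => by ring
    _ ≤ cosh a * potential y w g + sinh a * (-δ * potential y w g) := by
        gcongr
        exact sinh_nonneg_iff.2 (artanh_nonneg hδ.1)
    _ = √(1 - δ ^ 2) * potential y w g := by
        rw [← cosh_artanh_sub_mul_sinh_artanh ⟨by linarith [hδ.1], hδ.2⟩]
        ring

end Potential

lemma le_mul_prod_of_succ_le_mul {T : ℕ} (L : ℕ → ℝ) (r : Fin T → ℝ) (hr : ∀ t, 0 ≤ r t)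
    (hL : ∀ t : Fin T, L (t + 1) ≤ r t * L t) : L T ≤ L 0 * ∏ t, r t := by
  induction T with
  | zero => simp
  | succ T ih =>
    rw [Fin.prod_univ_castSucc]
    calc L (T + 1) ≤ r (Fin.last T) * L T := hL (Fin.last T)
      _ ≤ r (Fin.last T) * (L 0 * ∏ t : Fin T, r t.castSucc) := by
          gcongr
          · exact hr _
          · exact ih _ (fun t => hr _) (fun t => hL t.castSucc)
      _ = L 0 * ((∏ t : Fin T, r t.castSucc) * r (Fin.last T)) := by ring

section Rounds

variable {ι κ : Type*} [DecidableEq κ] {T : ℕ}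

def partialScore (h : Fin T → ι → κ) (α : Fin T → ℝ) (n : ℕ) (i : ι) (l : κ) : ℝ :=
  ∑ s ∈ univ.filter (fun s : Fin T => (s : ℕ) < n), α s * if h s i = l then 1 else 0

variable (h : Fin T → ι → κ) (α : Fin T → ℝ)

lemma partialScore_zero : partialScore h α 0 = 0 := by
  ext
  simp [partialScore]

lemma partialScore_succ (t : Fin T) :
    partialScore h α (t + 1) =
      fun i l => partialScore h α t i l + α t * if h t i = l then 1 else 0 := by
  have hfilter : univ.filter (fun s : Fin T => (s : ℕ) < t + 1) =
      insert t (univ.filter fun s : Fin T => (s : ℕ) < t) := by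
    ext s
    simp [le_iff_eq_or_lt, Fin.val_inj]
  ext i l
  rw [partialScore, hfilter, sum_insert (by simp), add_comm]
  rfl

lemma partialScore_val (t : Fin T) (i : ι) (l : κ) :
    partialScore h α t i l = ∑ s ∈ univ.filter (· < t), α s * if h s i = l then 1 else 0 := by
  simp only [partialScore, Fin.val_fin_lt]

lemma partialScore_self (i : ι) (l : κ) :
    partialScore h α T i l = ∑ t, α t * if h t i = l then 1 else 0 := by
  rw [partialScore, filter_true_of_mem fun s _ => s.isLt]

end Rounds

section Confusion

variable {ι κ : Type*} [Fintype ι] [DecidableEq κ]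

lemma potential_zero [Fintype κ] (y : ι → κ) (w : ι → ℝ) :
    potential y w 0 = (Fintype.card κ - 1) * ∑ i, w i := by
  rw [mul_sum]
  refine sum_congr rfl fun i _ => ?_
  have hcard : 1 ≤ Fintype.card κ := Fintype.card_pos_iff.2 ⟨y i⟩
  simp [filter_ne', card_erase_of_mem, Nat.cast_sub hcard]

lemma sum_one_div_card_fiber [Fintype κ] (y : ι → κ) (hy : Function.Surjective y) :
    ∑ i, 1 / (#(univ.filter fun i' => y i' = y i) : ℝ) = Fintype.card κ := by
  rw [← sum_fiberwise univ y]
  have hfiber : ∀ l, ∑ i ∈ univ.filter (y · = l), 1 / (#(univ.filter fun i' => y i' = y i) : ℝ)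
      = 1 := fun l => by
    obtain ⟨i₀, hi₀⟩ := hy l
    rw [sum_congr rfl fun i hi => by rw [(mem_filter.1 hi).2], sum_const, nsmul_eq_mul,
      mul_one_div_cancel]
    exact Nat.cast_ne_zero.2 (card_ne_zero_of_mem (mem_filter.2 ⟨mem_univ i₀, hi₀⟩))
  rw [sum_congr rfl fun l _ => hfiber l]
  simp

noncomputable def errorConfusion (y H : ι → κ) : Matrix κ κ ℝ :=
  Matrix.of fun l j => if l = j then 0 else
    (1 / (#(univ.filter fun i => y i = l) : ℝ)) *
      ∑ i, (if H i = j then 1 else 0) * (if y i = l then 1 else 0)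

lemma errorConfusion_mem_Icc (y H : ι → κ) (l j : κ) :
    errorConfusion y H l j ∈ Set.Icc 0 1 := by
  simp only [errorConfusion, Matrix.of_apply]
  split_ifs
  · simp
  have hcount : ∑ i, (if H i = j then (1 : ℝ) else 0) * (if y i = l then 1 else 0) ≤
      #(univ.filter fun i => y i = l) := by
    rw [← sum_boole]
    gcongr with i
    split_ifs <;> norm_num
  rw [one_div_mul_eq_div]
  exact ⟨by positivity, div_le_one_of_le₀ hcount (by positivity)⟩

lemma sum_errorConfusion [Fintype κ] (y H : ι → κ) :
    ∑ l, ∑ j, errorConfusion y H l j =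
      ∑ i, 1 / (#(univ.filter fun i' => y i' = y i) : ℝ) * (if H i = y i then 0 else 1) := by
  set g : κ → κ → ℝ := fun l j => if l = j then 0 else 1 / (#(univ.filter fun i => y i = l) : ℝ)
  have hentry : ∀ l j, errorConfusion y H l j =
      ∑ i, if y i = l then (if H i = j then g l j else 0) else 0 := by
    intro l j
    by_cases hlj : l = j <;> simp [errorConfusion, g, hlj, mul_sum, mul_ite]
  simp only [hentry]
  rw [sum_congr rfl fun l _ => sum_comm, sum_comm]
  refine sum_congr rfl fun i _ => ?_
  simp [g, eq_comm]

lemma sum_mul_error_le_potential [Fintype κ] (y H : ι → κ) (w : ι → ℝ) (g : ι → κ → ℝ)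
    (hw : ∀ i, 0 ≤ w i) (hH : ∀ i l, g i l ≤ g i (H i)) :
    ∑ i, w i * (if H i = y i then 0 else 1) ≤ potential y w g := by
  refine sum_le_sum fun i _ => ?_
  have hterm : ∀ j, 0 ≤ w i * exp (g i j - g i (y i)) := fun j => by positivity [hw i]
  by_cases hHi : H i = y i
  · simpa [hHi] using sum_nonneg fun j _ => hterm j
  calc w i * (if H i = y i then 0 else 1) = w i := by simp [hHi]
    _ ≤ w i * exp (g i (H i) - g i (y i)) :=
        le_mul_of_one_le_right (hw i) (one_le_exp (sub_nonneg.2 (hH i (y i))))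
    _ ≤ ∑ j ∈ univ.filter (· ≠ y i), w i * exp (g i j - g i (y i)) :=
        single_le_sum (fun j _ => hterm j) (mem_filter.2 ⟨mem_univ _, hHi⟩)

end Confusion

lemma norm_toEuclideanCLM_sq_le {n : Type*} [Fintype n] [DecidableEq n] (A : Matrix n n ℝ) :
    ‖Matrix.toEuclideanCLM (𝕜 := ℝ) A‖ ^ 2 ≤ ∑ l, ∑ j, A l j ^ 2 := by
  have hnonneg : 0 ≤ ∑ l, ∑ j, A l j ^ 2 := by positivity
  have hbound : ‖Matrix.toEuclideanCLM (𝕜 := ℝ) A‖ ≤ √(∑ l, ∑ j, A l j ^ 2) := by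
    refine ContinuousLinearMap.opNorm_le_bound _ (sqrt_nonneg _) fun x => ?_
    rw [EuclideanSpace.norm_eq, EuclideanSpace.norm_eq, ← sqrt_mul hnonneg]
    refine sqrt_le_sqrt ?_
    have happly : ∀ l, Matrix.toEuclideanCLM (𝕜 := ℝ) A x l = ∑ j, A l j * x j := fun l => rfl
    simp only [Real.norm_eq_abs, sq_abs, happly]
    rw [sum_mul]
    exact sum_le_sum fun l _ => sum_mul_sq_le_sq_mul_sq _ _ _
  calc ‖Matrix.toEuclideanCLM (𝕜 := ℝ) A‖ ^ 2 ≤ √(∑ l, ∑ j, A l j ^ 2) ^ 2 := by gcongr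
    _ = ∑ l, ∑ j, A l j ^ 2 := sq_sqrt hnonneg

/-- Combining the bounds: under the per-round weak learning edge
conditions, the squared operator norm of the empirical error-focused confusion matrix
of the final boosted hypothesis satisfies ‖C_S‖² ≤ K(K−1)·Π_t √(1−δ_t²). -/
theorem stmt_15 {m K T : ℕ}
    (y : Fin m → Fin K) (hfull : ∀ l : Fin K, ∃ i, y i = l)
    (h : Fin T → Fin m → Fin K) (δ α : Fin T → ℝ)
    (hδ : ∀ t, δ t ∈ Set.Ico (0:ℝ) 1)
    (hα : ∀ t, α t = (1/2) * Real.log ((1 + δ t) / (1 - δ t)))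
    (w : Fin m → ℝ)
    (hw : ∀ i, w i = 1 / ((Finset.univ.filter (fun i' => y i' = y i)).card : ℝ))
    (f : Fin T → Fin m → Fin K → ℝ)
    (hf : ∀ t i l, f t i l = ∑ s ∈ Finset.univ.filter (fun s => s < t),
        α s * (if h s i = l then (1:ℝ) else 0))
    (hedge : ∀ t : Fin T,
      (∑ i, ∑ l, (if l = y i then
          -(∑ j ∈ Finset.univ.filter (fun j => j ≠ y i),
              w i * Real.exp (f t i j - f t i (y i)))
        else w i * Real.exp (f t i l - f t i (y i))) * (if h t i = l then (1:ℝ) else 0)) ≤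
      ∑ i, ∑ l, (if l = y i then
          -(∑ j ∈ Finset.univ.filter (fun j => j ≠ y i),
              w i * Real.exp (f t i j - f t i (y i)))
        else w i * Real.exp (f t i l - f t i (y i))) *
          ((1 - δ t) / K + if l = y i then δ t else 0))
    (F : Fin m → Fin K → ℝ)
    (hF : ∀ i l, F i l = ∑ t, α t * (if h t i = l then (1:ℝ) else 0))
    (H : Fin m → Fin K) (hHmax : ∀ i l, F i l ≤ F i (H i))
    (C : Matrix (Fin K) (Fin K) ℝ)
    (hCdiag : ∀ l, C l l = 0)
    (hCoff : ∀ l j, l ≠ j → C l j =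
      (1 / ((Finset.univ.filter (fun i => y i = l)).card : ℝ)) *
        ∑ i, (if H i = j then (1:ℝ) else 0) * (if y i = l then 1 else 0)) :
    ‖Matrix.toEuclideanCLM (𝕜 := ℝ) C‖ ^ 2 ≤
      (K:ℝ) * ((K:ℝ) - 1) * ∏ t, Real.sqrt (1 - δ t ^ 2) := by
  obtain rfl : α = fun t => artanh (δ t) := funext fun t => by
    rw [hα, artanh_eq_half_log ⟨by linarith [(hδ t).1], (hδ t).2.le⟩]
  obtain rfl : f = fun t : Fin T => partialScore h (fun t => artanh (δ t)) t := by
    ext t i l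
    rw [hf, partialScore_val]
  obtain rfl : F = partialScore h (fun t => artanh (δ t)) T := by
    ext i l
    rw [hF, partialScore_self]
  obtain rfl : C = errorConfusion y H := by
    ext l j
    by_cases hlj : l = j
    · subst hlj
      simp [errorConfusion, hCdiag]
    · simp [errorConfusion, hCoff l j hlj, hlj]
  have hw0 : ∀ i, 0 ≤ w i := fun i => by rw [hw]; positivity
  set L : ℕ → ℝ := fun n => potential y w (partialScore h (fun t => artanh (δ t)) n)
  have hstep : ∀ t : Fin T, L (t + 1) ≤ √(1 - δ t ^ 2) * L t := fun t => by
    simp only [L, partialScore_succ]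
    exact potential_add_vote_le y (h t) w _ hw0 (hδ t) (hedge t)
  calc ‖Matrix.toEuclideanCLM (𝕜 := ℝ) (errorConfusion y H)‖ ^ 2
      ≤ ∑ l, ∑ j, errorConfusion y H l j ^ 2 := norm_toEuclideanCLM_sq_le _
    _ ≤ ∑ l, ∑ j, errorConfusion y H l j := by
        gcongr with l _ j _
        exact pow_le_of_le_one (errorConfusion_mem_Icc y H l j).1
          (errorConfusion_mem_Icc y H l j).2 two_ne_zero
    _ = ∑ i, w i * (if H i = y i then 0 else 1) := by simp only [sum_errorConfusion, hw]
    _ ≤ L T := sum_mul_error_le_potential y H w _ hw0 hHmax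
    _ ≤ L 0 * ∏ t, √(1 - δ t ^ 2) :=
        le_mul_prod_of_succ_le_mul L _ (fun t => sqrt_nonneg _) hstep
    _ = K * (K - 1) * ∏ t, √(1 - δ t ^ 2) := by
        simp only [L, partialScore_zero, potential_zero, hw, sum_one_div_card_fiber y hfull,
          Fintype.card_fin]
        ring
end
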